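/- arXiv:2307.06646 — 2 statements merged into one kernel-verified Lean document; each statement's English description precedes it below -/
import Mathlib

section
/- Let n ≥ 3 be an integer and let L be the (n+1) × (n+1) real matrix, with rows and columns indexed by {0, 1, …, n}, defined by: L₀₀ = n/(n−2); L₀ⱼ = −1/(n−2) for every 1 ≤ j ≤ n; Lⱼ₀ = −1 and Lⱼⱼ = 1 for every 1 ≤ j ≤ n; and all other entries equal to 0. Then the characteristic polynomial of L equals X · (X − 1)^{n−1} · (X − (2n−2)/(n−2)); in particular, L has eigenvalue 0 with multiplicity 1, eigenvalue 1 with multiplicity n − 1, and eigenvalue (2n−2)/(n−2) with multiplicity 1. -/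
open Polynomial Matrix

private theorem star_eval_aux (n : ℕ) (hn : 3 ≤ n) (t : ℝ) (ht : t ≠ 1)
    (L : Matrix (Fin (n + 1)) (Fin (n + 1)) ℝ)
    (hL : ∀ i j : Fin (n + 1),
      L i j = if i = 0 then
                (if j = 0 then (n : ℝ) / ((n : ℝ) - 2) else -1 / ((n : ℝ) - 2))
              else
                (if j = 0 then -1 else if i = j then 1 else 0)) :
    eval t L.charpoly = eval t (X * (X - 1) ^ (n - 1) *
        (X - Polynomial.C ((2 * (n : ℝ) - 2) / ((n : ℝ) - 2)))) := by
  have hn3 : (3:ℝ) ≤ (n:ℝ) := by exact_mod_cast hn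
  have hn2 : (n:ℝ) - 2 ≠ 0 := by linarith
  have ht1 : t - 1 ≠ 0 := sub_ne_zero.mpr ht
  set N : Matrix (Fin (n+1)) (Fin (n+1)) ℝ :=
    Matrix.of (fun i j => (if i = j then t else 0) - L i j) with hN
  have hmap : (charmatrix L).map (eval t) = N := by
    ext i j
    by_cases h : i = j <;>
      simp [h, charmatrix_apply, Matrix.diagonal_apply, hN]
  have hLHS : eval t L.charpoly = N.det := by
    rw [Matrix.charpoly, ← Polynomial.coe_evalRingHom, RingHom.map_det, RingHom.mapMatrix_apply,
      Polynomial.coe_evalRingHom, hmap]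
  rw [hLHS]
  -- reindex
  set e : Fin 1 ⊕ Fin n ≃ Fin (n+1) :=
    finSumFinEquiv.trans (finCongr (Nat.add_comm 1 n)) with he
  have h0 : e (Sum.inl 0) = 0 := rfl
  have hr : ∀ j : Fin n, e (Sum.inr j) ≠ 0 := by
    intro j h
    have := e.injective (h.trans h0.symm)
    exact absurd this (by simp)
  have hrr : ∀ j k : Fin n, (e (Sum.inr j) = e (Sum.inr k)) ↔ j = k := by
    intro j k; simp
  set A : Matrix (Fin 1) (Fin 1) ℝ := Matrix.of (fun _ _ => t - (n:ℝ)/((n:ℝ)-2)) with hA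
  set B : Matrix (Fin 1) (Fin n) ℝ := Matrix.of (fun _ _ => 1/((n:ℝ)-2)) with hB
  set Cm : Matrix (Fin n) (Fin 1) ℝ := Matrix.of (fun _ _ => (1:ℝ)) with hC
  set D : Matrix (Fin n) (Fin n) ℝ := (t-1) • 1 with hD
  have hsub : N.submatrix e e = Matrix.fromBlocks A B Cm D := by
    ext i j
    cases i with
    | inl i =>
      cases j with
      | inl j =>
        have hi : i = 0 := Subsingleton.elim _ _
        have hj : j = 0 := Subsingleton.elim _ _
        subst hi hj
        simp [hN, hL, h0, hA, div_eq_mul_inv]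
      | inr j =>
        have hi : i = 0 := Subsingleton.elim _ _
        subst hi
        have h1 : e (Sum.inl 0) ≠ e (Sum.inr j) := by rw [h0]; exact fun h => hr j h.symm
        have h2 : (0 : Fin (n+1)) ≠ e (Sum.inr j) := fun h => hr j h.symm
        simp [hN, hL, h0, hr j, hB, h1, h2, div_eq_mul_inv]
    | inr i =>
      cases j with
      | inl j =>
        have hj : j = 0 := Subsingleton.elim _ _
        subst hj
        have h1 : e (Sum.inr i) ≠ e (Sum.inl 0) := fun h => hr i (h.trans h0)
        have h2 : e (Sum.inr i) ≠ 0 := hr i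
        simp [hN, hL, h0, h2, hC, h1]
      | inr j =>
        by_cases h : i = j
        · subst h
          simp [hN, hL, hr i, hD, Matrix.one_apply]
        · have h1 : e (Sum.inr i) ≠ e (Sum.inr j) := by
            simpa [hrr] using h
          simp [hN, hL, hr i, hr j, hD, h1, h, Matrix.one_apply]
  have hdet : N.det = (Matrix.fromBlocks A B Cm D).det := by
    rw [← hsub, Matrix.det_submatrix_equiv_self]
  set E : Matrix (Fin n) (Fin n) ℝ := (t-1)⁻¹ • 1 with hE
  have hDE : D * E = 1 := by
    rw [hD, hE, Matrix.smul_mul, Matrix.mul_smul, Matrix.one_mul, smul_smul,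
      mul_inv_cancel₀ ht1, one_smul]
  have hED : E * D = 1 := by
    rw [hD, hE, Matrix.smul_mul, Matrix.mul_smul, Matrix.one_mul, smul_smul,
      inv_mul_cancel₀ ht1, one_smul]
  haveI : Invertible D := ⟨E, hED, hDE⟩
  have hinv : ⅟D = E := invOf_eq_right_inv hDE
  rw [hdet, Matrix.det_fromBlocks₂₂, hinv]
  have hBEC : A - B * E * Cm = Matrix.of (fun _ _ : Fin 1 =>
      t - (n:ℝ)/((n:ℝ)-2) - (n:ℝ) * ((t-1)⁻¹ * (1/((n:ℝ)-2)))) := by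
    ext i j
    simp [hA, hB, hC, hE, Matrix.mul_smul, Matrix.mul_one, Matrix.mul_apply,
      Finset.sum_const, Finset.card_univ, mul_comm]
  rw [hBEC]
  have hdetD : D.det = (t-1)^n := by
    simp [hD]
  rw [hdetD, Matrix.det_unique]
  have hpow : (t-1)^n = (t-1)^(n-1) * (t-1) := by
    rw [← pow_succ]; congr 1; omega
  simp only [Matrix.of_apply, eval_mul, eval_sub, eval_pow, eval_X, eval_one, eval_C]
  rw [hpow]
  field_simp
  ring

/-- The characteristic polynomial of the weighted graph Laplacian of the star with `n`
branches and a loop attached at each leaf. The matrix `L` is indexed by `{0, 1, …, n}`: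
`L 0 0 = n/(n-2)`, `L 0 j = -1/(n-2)` for `j ≥ 1`, `L j 0 = -1` and `L j j = 1` for `j ≥ 1`,
and all other entries vanish. Its characteristic polynomial is
`X * (X - 1)^(n-1) * (X - (2n-2)/(n-2))`, so `L` has eigenvalue `0` with multiplicity `1`,
eigenvalue `1` with multiplicity `n - 1` and eigenvalue `(2n-2)/(n-2)` with multiplicity `1`. -/
theorem star_graph_laplacian_charpoly (n : ℕ) (hn : 3 ≤ n)
    (L : Matrix (Fin (n + 1)) (Fin (n + 1)) ℝ)
    (hL : ∀ i j : Fin (n + 1),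
      L i j = if i = 0 then
                (if j = 0 then (n : ℝ) / ((n : ℝ) - 2) else -1 / ((n : ℝ) - 2))
              else
                (if j = 0 then -1 else if i = j then 1 else 0)) :
    L.charpoly =
      X * (X - 1) ^ (n - 1) *
        (X - Polynomial.C ((2 * (n : ℝ) - 2) / ((n : ℝ) - 2))) := by
  apply Polynomial.eq_of_infinite_eval_eq
  apply Set.Infinite.mono (s := {t : ℝ | t ≠ 1})
  · intro t (ht : t ≠ 1)
    exact star_eval_aux n hn t ht L hL
  · have : ({t : ℝ | t ≠ 1}) = ({1} : Set ℝ)ᶜ := by ext x; simp [Set.mem_compl_iff]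
    rw [this]
    exact (Set.finite_singleton 1).infinite_compl
end

section
/- Let (X, d) be a metric space in which every two points x, y are joined by a geodesic, i.e. there is an isometric embedding γ : [0, d(x,y)] → X with γ(0) = x and γ(d(x,y)) = y, and let μ be a Borel measure on X. Suppose c > 0 is such that μ(B(z, 1/2)) ≥ c for every z ∈ X, where B(z, s) denotes the open ball of center z and radius s. Let r ≥ 1 be a real number and let x ∈ X be such that there exists y ∈ X with d(x, y) ≥ r/2. Then μ(B(x, r/2)) ≥ (⌊(r−1)/2⌋ + 1) · c. -/
open MeasureTheory Metric
open scoped ENNReal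

/-- Volume growth along a geodesic (proof of Lemma 2.1): in a geodesic metric space `X`
equipped with a Borel measure `μ` such that every ball of radius `1/2` has measure at
least `c > 0`, if `r ≥ 1` and there is a point `y` with `d(x, y) ≥ r/2`, then the ball
`B(x, r/2)` has measure at least `(⌊(r-1)/2⌋ + 1) * c`. -/
theorem volume_growth_along_geodesic
    {X : Type*} [MetricSpace X] [MeasurableSpace X] [BorelSpace X] (μ : Measure X)
    (hgeo : ∀ x y : X, ∃ γ : ℝ → X, γ 0 = x ∧ γ (dist x y) = y ∧
      ∀ s ∈ Set.Icc (0 : ℝ) (dist x y), ∀ t ∈ Set.Icc (0 : ℝ) (dist x y),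
        dist (γ s) (γ t) = |s - t|)
    (c : ℝ) (hc : 0 < c)
    (hball : ∀ z : X, ENNReal.ofReal c ≤ μ (ball z (1 / 2)))
    (r : ℝ) (hr : 1 ≤ r)
    (x : X) (hfar : ∃ y : X, r / 2 ≤ dist x y) :
    ((⌊(r - 1) / 2⌋₊ + 1 : ℕ) : ℝ≥0∞) * ENNReal.ofReal c ≤ μ (ball x (r / 2)) := by
  obtain ⟨y, hy⟩ := hfar
  obtain ⟨γ, hγ0, hγd, hiso⟩ := hgeo x y
  set n := ⌊(r - 1) / 2⌋₊ with hn
  have hnle : (n : ℝ) ≤ (r - 1) / 2 := Nat.floor_le (by linarith)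
  have hmem : ∀ i : ℕ, i ∈ Finset.range (n + 1) → (i : ℝ) ∈ Set.Icc (0 : ℝ) (dist x y) := by
    intro i hi
    have : (i : ℝ) ≤ n := by
      exact_mod_cast Nat.lt_succ_iff.mp (Finset.mem_range.mp hi)
    exact ⟨Nat.cast_nonneg i, by linarith⟩
  have hsub : ∀ i ∈ Finset.range (n + 1), ball (γ i) (1 / 2) ⊆ ball x (r / 2) := by
    intro i hi z hz
    have hi' : (i : ℝ) ≤ n := by
      exact_mod_cast Nat.lt_succ_iff.mp (Finset.mem_range.mp hi)
    have hdi : dist x (γ i) = i := by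
      have := hiso 0 ⟨le_refl 0, dist_nonneg⟩ i (hmem i hi)
      rw [hγ0] at this
      rw [this]
      rw [abs_of_nonpos (by simp [Nat.cast_nonneg])]
      ring
    have hz' : dist (γ i) z < 1 / 2 := mem_ball'.mp hz
    have : dist x z < r / 2 := by
      calc dist x z ≤ dist x (γ i) + dist (γ i) z := dist_triangle _ _ _
        _ < i + 1 / 2 := by rw [hdi]; linarith
        _ ≤ r / 2 := by linarith
    exact mem_ball'.mpr this
  have hdisj : (Finset.range (n + 1) : Set ℕ).Pairwise
      (Function.onFun Disjoint fun i => ball (γ i) (1 / 2)) := by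
    intro i hi j hj hij
    have hdij : dist (γ i) (γ j) = |(i : ℝ) - j| :=
      hiso i (hmem i hi) j (hmem j hj)
    have h1 : (1 : ℝ) ≤ |(i : ℝ) - j| := by
      have : (i : ℝ) ≠ j := by exact_mod_cast hij
      rcases lt_or_gt_of_ne hij with h | h
      · have : (i : ℝ) + 1 ≤ j := by exact_mod_cast h
        rw [abs_sub_comm, abs_of_nonneg (by linarith)]
        linarith
      · rw [abs_of_nonneg (sub_nonneg.mpr (by exact_mod_cast h.le))]
        have : (j : ℝ) + 1 ≤ i := by exact_mod_cast h
        linarith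
    exact ball_disjoint_ball (by rw [hdij]; linarith)
  have hmeas : ∀ i ∈ Finset.range (n + 1), MeasurableSet (ball (γ i) (1 / 2)) :=
    fun i _ => measurableSet_ball
  calc ((n + 1 : ℕ) : ℝ≥0∞) * ENNReal.ofReal c
      = ∑ _i ∈ Finset.range (n + 1), ENNReal.ofReal c := by
        simp [Finset.sum_const, mul_comm]
    _ ≤ ∑ i ∈ Finset.range (n + 1), μ (ball (γ i) (1 / 2)) :=
        Finset.sum_le_sum fun i _ => hball (γ i)
    _ = μ (⋃ i ∈ Finset.range (n + 1), ball (γ i) (1 / 2)) :=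
        (measure_biUnion_finset hdisj hmeas).symm
    _ ≤ μ (ball x (r / 2)) := measure_mono (Set.iUnion₂_subset hsub)
end
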